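/- For any vector v ∈ ℂⁿ and any ε ∈ (0,1), the (1,ε²)-support size of v is at least the (2,ε)-support size of v: |supp¹_{ε²}(v)| ≥ |supp²_ε(v)|. -/

import Mathlib

/-!
Let `T` witness `|supp¹_{ε²}(v)| = k` and let `S` be a set of `k` largest entries of `|v|`, so
that `‖v[Sᶜ]‖₁ ≤ ‖v[Tᶜ]‖₁ ≤ ε² ‖v‖₁`. Some `a` separates the entries on `Sᶜ` (all `≤ a`) from
those on `S` (all `≥ a`), hence `‖v[Sᶜ]‖₂² ≤ a ‖v[Sᶜ]‖₁` and `a ‖v[S]‖₁ ≤ ‖v[S]‖₂²`. Combining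
these with `(1 - ε²) ‖v[Sᶜ]‖₁ ≤ ε² ‖v[S]‖₁` gives `‖v[Sᶜ]‖₂² ≤ ε² ‖v‖₂²`, so `S` witnesses
`|supp²_ε(v)| ≤ k`.
-/

open Finset

noncomputable def suppSize1 {n : ℕ} (δ : ℝ) (v : Fin n → ℂ) : ℕ :=
  sInf {s : ℕ | ∃ T : Finset (Fin n), T.card = s ∧
    ∑ i ∈ Tᶜ, ‖v i‖ ≤ δ * ∑ i, ‖v i‖}

noncomputable def suppSize2 {n : ℕ} (δ : ℝ) (v : Fin n → ℂ) : ℕ :=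
  sInf {s : ℕ | ∃ T : Finset (Fin n), T.card = s ∧
    Real.sqrt (∑ i ∈ Tᶜ, ‖v i‖ ^ 2) ≤ δ * Real.sqrt (∑ i, ‖v i‖ ^ 2)}

section TopSet

variable {ι α : Type*} [Fintype ι]

def IsTopSet [LE α] (f : ι → α) (S : Finset ι) : Prop :=
  ∀ i ∈ S, ∀ j ∉ S, f j ≤ f i

theorem IsTopSet.exists_separating [AddCommMonoid α] [LinearOrder α] [IsOrderedAddMonoid α]
    {f : ι → α} {S : Finset ι} (hf : ∀ i, 0 ≤ f i) (hS : IsTopSet f S) :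
    ∃ a, 0 ≤ a ∧ (∀ j ∉ S, f j ≤ a) ∧ ∀ i ∈ S, a ≤ f i := by
  rcases S.eq_empty_or_nonempty with rfl | hne
  · exact ⟨∑ i, f i, sum_nonneg fun i _ => hf i,
      fun j _ => single_le_sum (fun i _ => hf i) (mem_univ j), by simp⟩
  · obtain ⟨i₀, hi₀, hmin⟩ := exists_min_image S f hne
    exact ⟨f i₀, hf i₀, fun j hj => hS i₀ hi₀ j hj, hmin⟩

variable [DecidableEq ι]

theorem exists_isTopSet_sum_compl_le [AddCommGroup α] [LinearOrder α] [IsOrderedAddMonoid α]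
    (f : ι → α) (T : Finset ι) :
    ∃ S : Finset ι, #S = #T ∧ IsTopSet f S ∧ ∑ i ∈ Sᶜ, f i ≤ ∑ i ∈ Tᶜ, f i := by
  obtain ⟨S, hS, hmax⟩ := exists_max_image (powersetCard #T univ) (fun s => ∑ i ∈ s, f i)
    ⟨T, mem_powersetCard_univ.mpr rfl⟩
  rw [mem_powersetCard_univ] at hS
  refine ⟨S, hS, fun i hi j hj => ?_, ?_⟩
  · by_contra! hlt
    have hj' : j ∉ S.erase i := fun h => hj (mem_of_mem_erase h)
    have hcard : insert j (S.erase i) ∈ powersetCard #T univ := by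
      rw [mem_powersetCard_univ, card_insert_of_notMem hj', card_erase_of_mem hi, ← hS]
      have := card_pos.mpr ⟨i, hi⟩
      omega
    have := hmax _ hcard
    rw [sum_insert hj', ← add_sum_erase S f hi] at this
    exact (add_lt_add_left hlt _).not_ge this
  · have hTS := hmax T (mem_powersetCard_univ.mpr rfl)
    refine le_of_add_le_add_left (a := ∑ i ∈ S, f i) ?_
    rw [sum_add_sum_compl, ← sum_add_sum_compl T f]
    gcongr

theorem IsTopSet.sum_compl_sq_le {f : ι → ℝ} {S : Finset ι} {δ : ℝ} (hf : ∀ i, 0 ≤ f i)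
    (hS : IsTopSet f S) (hδ : 0 ≤ δ) (h : ∑ i ∈ Sᶜ, f i ≤ δ * ∑ i, f i) :
    ∑ i ∈ Sᶜ, f i ^ 2 ≤ δ * ∑ i, f i ^ 2 := by
  obtain ⟨a, ha, h_compl, h_mem⟩ := hS.exists_separating hf
  have hsq_compl : ∑ i ∈ Sᶜ, f i ^ 2 ≤ a * ∑ i ∈ Sᶜ, f i := by
    rw [mul_sum]
    gcongr with j hj
    rw [sq]
    exact mul_le_mul_of_nonneg_right (h_compl j (mem_compl.mp hj)) (hf j)
  have hsq_mem : a * ∑ i ∈ S, f i ≤ ∑ i ∈ S, f i ^ 2 := by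
    rw [mul_sum]
    gcongr with i hi
    rw [sq]
    exact mul_le_mul_of_nonneg_right (h_mem i hi) (hf i)
  have hsplit_sq := sum_add_sum_compl S (f · ^ 2)
  have hsq_nonneg : 0 ≤ ∑ i ∈ S, f i ^ 2 := sum_nonneg fun i _ => sq_nonneg (f i)
  have h' : (1 - δ) * ∑ i ∈ Sᶜ, f i ≤ δ * ∑ i ∈ S, f i := by
    rw [← sum_add_sum_compl S f] at h
    linarith
  rw [← hsplit_sq]
  rcases le_or_gt δ 1 with hδ1 | hδ1
  · -- `(1 - δ) ‖f[Sᶜ]‖₂² ≤ a (1 - δ) ‖f[Sᶜ]‖₁ ≤ a δ ‖f[S]‖₁ ≤ δ ‖f[S]‖₂²`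
    linarith [mul_le_mul_of_nonneg_left hsq_compl (sub_nonneg.mpr hδ1),
      mul_le_mul_of_nonneg_left hsq_mem hδ, mul_le_mul_of_nonneg_left h' ha]
  · nlinarith [sum_nonneg fun i (_ : i ∈ Sᶜ) => sq_nonneg (f i)]

end TopSet

/-- For any `v ∈ ℂⁿ` and `ε ∈ (0,1)`, `|supp¹_{ε²}(v)| ≥ |supp²_ε(v)|`. -/
theorem one_supp_ge_two_supp (n : ℕ) (v : Fin n → ℂ)
    (ε : ℝ) (hε : ε ∈ Set.Ioo (0 : ℝ) 1) :
    suppSize2 ε v ≤ suppSize1 (ε ^ 2) v := by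
  have h_ne : {s : ℕ | ∃ T : Finset (Fin n), #T = s ∧
      ∑ i ∈ Tᶜ, ‖v i‖ ≤ ε ^ 2 * ∑ i, ‖v i‖}.Nonempty :=
    ⟨n, univ, card_fin n, by simp only [compl_univ, sum_empty]; positivity⟩
  obtain ⟨T, hT_card, hT⟩ := Nat.sInf_mem h_ne
  obtain ⟨S, hS_card, hS_top, hS_le⟩ := exists_isTopSet_sum_compl_le (‖v ·‖) T
  have hS := hS_top.sum_compl_sq_le (fun i => norm_nonneg (v i)) (sq_nonneg ε) (hS_le.trans hT)
  refine Nat.sInf_le ⟨S, hS_card.trans hT_card, ?_⟩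
  calc √(∑ i ∈ Sᶜ, ‖v i‖ ^ 2) ≤ √(ε ^ 2 * ∑ i, ‖v i‖ ^ 2) := Real.sqrt_le_sqrt hS
    _ = ε * √(∑ i, ‖v i‖ ^ 2) := by rw [Real.sqrt_mul (sq_nonneg ε), Real.sqrt_sq hε.1.le]
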